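/- Let G be a totally disconnected locally compact group. Then for any two compact open subgroups U, V of G, the subgroups [A](U) and [A](V) are commensurate. -/

import Mathlib

/-!
Let `N ≤ U` be an open subgroup normalized by the compact group `U`. A closed normal
`[A]`-subgroup `B` of `N` has only finitely many `U`-conjugates (at most one per coset of `N`),
and their product is a closed normal `[A]`-subgroup of `U` containing `B`; hence
`[A](N) ≤ [A](U)`. Conversely the closed normal `[A]`-subgroups `A` of `U` form a directed family,
so, `N` being open, `[A](U) ∩ N` lies in the closure of the union of the closed normal
`[A]`-subgroups `A ∩ N` of `N`; hence `[A](U) ∩ N ≤ [A](N)`. As `N` has finite index in `U`,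
`[A](U)` and `[A](N)` are commensurable. Passing to open normal cores, `[A](U)` and `[A](V)` are
both commensurable with `[A](U ∩ V)`.
-/

/-- `P` behaves like membership in the class `[A]` for closed subgroups of `G`:
conjugation invariant, closed under closed normal subgroups, and closed under finite
products of normal `P`-subgroups. -/
structure IsAClassOn (G : Type*) [Group G] [TopologicalSpace G]
    (P : Subgroup G → Prop) : Prop where
  conj : ∀ L : Subgroup G, P L → ∀ g : G, P (L.map (MulAut.conj g).toMonoidHom)
  normal_sub : ∀ L : Subgroup G, P L → ∀ M : Subgroup G, IsClosed (M : Set G) → M ≤ L →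
    (∀ l ∈ L, ∀ m ∈ M, l * m * l⁻¹ ∈ M) → P M
  prod : ∀ (W : Subgroup G) (n : ℕ) (V : Fin n → Subgroup G),
    (∀ i, P (V i)) → (∀ i, V i ≤ W) →
    (∀ i, ∀ w ∈ W, ∀ v ∈ V i, w * v * w⁻¹ ∈ V i) →
    ((W : Set G) = {x : G | ∃ f : Fin n → G, (∀ i, f i ∈ V i) ∧ x = (List.ofFn f).prod}) →
    P W

/-- `[A](U)`: the closed subgroup of `U` generated by all closed normal `P`-subgroups of
`U`. -/
noncomputable def AClosure {G : Type*} [Group G] [TopologicalSpace G] [IsTopologicalGroup G]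
    (P : Subgroup G → Prop) (U : Subgroup G) : Subgroup G :=
  (sSup {A : Subgroup G | A ≤ U ∧ IsClosed (A : Set G) ∧ P A ∧
    ∀ u ∈ U, ∀ a ∈ A, u * a * u⁻¹ ∈ A}).topologicalClosure

open Subgroup
open scoped Pointwise

section Group
variable {G : Type*} [Group G]

theorem le_normalizer_iff_forall_conj_mem {H N : Subgroup G} :
    H ≤ normalizer (N : Set G) ↔ ∀ h ∈ H, ∀ n ∈ N, h * n * h⁻¹ ∈ N := by
  refine ⟨fun hle h hh n => (mem_normalizer_iff.mp (hle hh) n).mp, fun hc h hh n => ?_⟩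
  refine ⟨hc h hh n, fun hn => ?_⟩
  simpa [mul_assoc] using hc h⁻¹ (H.inv_mem hh) _ hn

theorem map_conj_mul (g h : G) (H : Subgroup G) :
    H.map (MulAut.conj (g * h)).toMonoidHom =
      (H.map (MulAut.conj h).toMonoidHom).map (MulAut.conj g).toMonoidHom := by
  rw [map_map]
  congr 1
  ext x
  simp [mul_assoc]

theorem map_conj_of_mem_normalizer {g : G} {H : Subgroup G} (hg : g ∈ normalizer (H : Set G)) :
    H.map (MulAut.conj g).toMonoidHom = H :=
  mem_normalizer_iff_map_conj_eq.mp hg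

theorem coe_map_conj (g : G) (H : Subgroup G) :
    ((H.map (MulAut.conj g).toMonoidHom : Subgroup G) : Set G) =
      (fun x => g⁻¹ * x * g) ⁻¹' H := by
  ext x
  simp only [coe_map, Set.mem_image, SetLike.mem_coe, Set.mem_preimage, MulEquiv.coe_toMonoidHom,
    MulAut.conj_apply]
  constructor
  · rintro ⟨y, hy, rfl⟩
    simpa [mul_assoc] using hy
  · intro hx
    exact ⟨_, hx, by group⟩

theorem le_normalizer_iSup_map_conj (U H : Subgroup G) :
    U ≤ normalizer
      ((⨆ u : U, H.map (MulAut.conj (u : G)).toMonoidHom : Subgroup G) : Set G) := by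
  intro g hg
  rw [mem_normalizer_iff_map_conj_eq]
  change map (MulAut.conj g).toMonoidHom _ = _
  simp_rw [Subgroup.map_iSup, ← map_conj_mul]
  exact (Equiv.mulLeft (⟨g, hg⟩ : U)).iSup_comp
    (g := fun u : U => H.map (MulAut.conj (u : G)).toMonoidHom)

theorem le_normalizer_iInf_map_conj (U H : Subgroup G) :
    U ≤ normalizer
      ((⨅ u : U, H.map (MulAut.conj (u : G)).toMonoidHom : Subgroup G) : Set G) := by
  intro g hg
  rw [mem_normalizer_iff_map_conj_eq]
  change map (MulAut.conj g).toMonoidHom _ = _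
  simp_rw [Subgroup.map_iInf (MulAut.conj g).toMonoidHom (MulAut.conj g).injective,
    ← map_conj_mul]
  exact (Equiv.mulLeft (⟨g, hg⟩ : U)).iInf_comp
    (g := fun u : U => H.map (MulAut.conj (u : G)).toMonoidHom)

def finProdSet {n : ℕ} (V : Fin n → Subgroup G) : Set G :=
  {x | ∃ f : Fin n → G, (∀ i, f i ∈ V i) ∧ x = (List.ofFn f).prod}

theorem finProdSet_zero (V : Fin 0 → Subgroup G) : finProdSet V = {1} := by
  ext x
  simp [finProdSet]

theorem finProdSet_succ {n : ℕ} (V : Fin (n + 1) → Subgroup G) :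
    finProdSet V = (V 0 : Set G) * finProdSet fun i => V i.succ := by
  ext x
  constructor
  · rintro ⟨f, hf, rfl⟩
    exact ⟨f 0, hf 0, _, ⟨fun i => f i.succ, fun i => hf i.succ, rfl⟩,
      by rw [List.ofFn_succ]; rfl⟩
  · rintro ⟨v, hv, _, ⟨f, hf, rfl⟩, rfl⟩
    refine ⟨Fin.cons v f, Fin.cases hv hf, ?_⟩
    simp [List.ofFn_succ]

theorem coe_iSup_eq_finProdSet {W : Subgroup G} {n : ℕ} (V : Fin n → Subgroup G)
    (hVW : ∀ i, V i ≤ W) (hW : ∀ i, W ≤ normalizer (V i : Set G)) :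
    ((⨆ i, V i : Subgroup G) : Set G) = finProdSet V := by
  induction n with
  | zero => simp [finProdSet_zero, iSup_of_empty]
  | succ n ih =>
    have hsucc : ⨆ i, V i = V 0 ⊔ ⨆ i : Fin n, V i.succ :=
      le_antisymm
        (iSup_le (Fin.cases le_sup_left fun i =>
          le_sup_of_le_right (le_iSup (fun i : Fin n => V i.succ) i)))
        (sup_le (le_iSup V 0) (iSup_le fun i => le_iSup V i.succ))
    rw [finProdSet_succ, ← ih _ (fun i => hVW _) (fun i => hW _), hsucc,
      coe_mul_of_left_le_normalizer_right]
    refine le_trans ?_ (iInf_normalizer_le_normalizer_iSup _)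
    exact le_iInf fun i => (hVW 0).trans (hW i.succ)

end Group

section TopologicalGroup
variable {G : Type*} [Group G] [TopologicalSpace G] [IsTopologicalGroup G]

theorem isCompact_finProdSet {n : ℕ} {V : Fin n → Subgroup G}
    (hV : ∀ i, IsCompact (V i : Set G)) : IsCompact (finProdSet V) := by
  induction n with
  | zero => simp [finProdSet_zero]
  | succ n ih =>
    rw [finProdSet_succ]
    exact (hV 0).mul (ih fun i => hV i.succ)

theorem finite_quotient_subgroupOf_of_isOpen {U N : Subgroup G} (hU : IsCompact (U : Set G))
    (hN : IsOpen (N : Set G)) : Finite (U ⧸ N.subgroupOf U) :=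
  have := isCompact_iff_compactSpace.mp hU
  quotient_finite_of_isOpen _ (hN.preimage continuous_subtype_val)

theorem finite_range_map_conj {U N H : Subgroup G} (hU : IsCompact (U : Set G))
    (hN : IsOpen (N : Set G)) (hNH : N ≤ normalizer (H : Set G)) :
    (Set.range fun u : U => H.map (MulAut.conj (u : G)).toMonoidHom).Finite := by
  have := finite_quotient_subgroupOf_of_isOpen hU hN
  refine (Set.finite_range fun q : U ⧸ N.subgroupOf U =>
    H.map (MulAut.conj ((q.out : U) : G)).toMonoidHom).subset ?_
  rintro _ ⟨u, rfl⟩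
  obtain ⟨n, hn⟩ := QuotientGroup.mk_out_eq_mul (N.subgroupOf U) u
  refine ⟨u, ?_⟩
  dsimp only
  rw [hn, Subgroup.coe_mul, map_conj_mul, map_conj_of_mem_normalizer (hNH (mem_subgroupOf.mp n.2))]

theorem exists_isOpen_le_normalizer {U N : Subgroup G} (hU : IsCompact (U : Set G))
    (hN : IsOpen (N : Set G)) :
    ∃ M : Subgroup G, M ≤ N ∧ IsOpen (M : Set G) ∧ U ≤ normalizer (M : Set G) := by
  refine ⟨⨅ u : U, N.map (MulAut.conj (u : G)).toMonoidHom,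
    iInf_le_of_le 1 (map_conj_of_mem_normalizer (N.le_normalizer N.one_mem)).le, ?_,
    le_normalizer_iInf_map_conj U N⟩
  rw [iInf, coe_sInf]
  refine (finite_range_map_conj hU hN N.le_normalizer).isOpen_biInter ?_
  rintro _ ⟨u, rfl⟩
  rw [coe_map_conj]
  exact hN.preimage (by fun_prop)

theorem relIndex_ne_zero_of_isOpen {U N : Subgroup G} (hU : IsCompact (U : Set G))
    (hN : IsOpen (N : Set G)) : N.relIndex U ≠ 0 :=
  have := finite_quotient_subgroupOf_of_isOpen hU hN
  index_ne_zero_of_finite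

end TopologicalGroup

section AClosure
variable {G : Type*} [Group G] [TopologicalSpace G] {P : Subgroup G → Prop}

def aGenerators (P : Subgroup G → Prop) (U : Subgroup G) : Set (Subgroup G) :=
  {A | A ≤ U ∧ IsClosed (A : Set G) ∧ P A ∧ U ≤ normalizer (A : Set G)}

namespace IsAClassOn

theorem prop_iSup (hP : IsAClassOn G P) {W : Subgroup G} {n : ℕ} {V : Fin n → Subgroup G}
    (hPV : ∀ i, P (V i)) (hVW : ∀ i, V i ≤ W) (hW : ∀ i, W ≤ normalizer (V i : Set G)) :
    P (⨆ i, V i) :=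
  hP.prod _ n V hPV (le_iSup V)
    (fun i => le_normalizer_iff_forall_conj_mem.mp ((iSup_le hVW).trans (hW i)))
    (coe_iSup_eq_finProdSet V hVW hW)

theorem prop_bot (hP : IsAClassOn G P) : P ⊥ := by
  simpa [iSup_of_empty] using hP.prop_iSup (W := ⊥) (V := Fin.elim0) (fun i => i.elim0)
    (fun i => i.elim0) (fun i => i.elim0)

theorem bot_mem_aGenerators [T1Space G] (hP : IsAClassOn G P) (U : Subgroup G) :
    ⊥ ∈ aGenerators P U :=
  ⟨bot_le, by simp, hP.prop_bot, le_normalizer_iff_forall_conj_mem.mpr (by simp)⟩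

theorem inf_mem_aGenerators (hP : IsAClassOn G P) {U N A : Subgroup G}
    (hA : A ∈ aGenerators P U) (hNc : IsClosed (N : Set G)) (hNU : N ≤ U)
    (hUN : U ≤ normalizer (N : Set G)) : A ⊓ N ∈ aGenerators P N := by
  obtain ⟨hAU, hAc, hPA, hUA⟩ := hA
  have hU : U ≤ normalizer ((A ⊓ N : Subgroup G) : Set G) :=
    (le_inf hUA hUN).trans inf_normalizer_le_normalizer_inf
  have hc : IsClosed ((A ⊓ N : Subgroup G) : Set G) := hAc.inter hNc
  exact ⟨inf_le_right, hc,
    hP.normal_sub A hPA _ hc inf_le_left (le_normalizer_iff_forall_conj_mem.mp (hAU.trans hU)),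
    hNU.trans hU⟩

variable [IsTopologicalGroup G]

theorem map_conj_mem_aGenerators (hP : IsAClassOn G P) {N B : Subgroup G}
    (hB : B ∈ aGenerators P N) {g : G} (hg : g ∈ normalizer (N : Set G)) :
    B.map (MulAut.conj g).toMonoidHom ∈ aGenerators P N := by
  obtain ⟨hBN, hBc, hPB, hNB⟩ := hB
  have hNg := map_conj_of_mem_normalizer hg
  refine ⟨hNg ▸ map_mono hBN, ?_, hP.conj B hPB g, ?_⟩
  · rw [coe_map_conj]
    exact hBc.preimage (by fun_prop)
  · rw [← hNg, ← map_equiv_normalizer_eq]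
    exact map_mono hNB

theorem sSup_mem_aGenerators [T2Space G] (hP : IsAClassOn G P) {U : Subgroup G}
    (hU : IsCompact (U : Set G)) {S : Set (Subgroup G)} (hS : S.Finite)
    (hSU : S ⊆ aGenerators P U) : sSup S ∈ aGenerators P U := by
  have := hS.to_subtype
  obtain ⟨n, ⟨e⟩⟩ := Finite.exists_equiv_fin S
  set V : Fin n → Subgroup G := fun i => e.symm i
  have hV : ∀ i, V i ∈ aGenerators P U := fun i => hSU (e.symm i).2
  have hVU : ∀ i, V i ≤ U := fun i => (hV i).1
  have hUV : ∀ i, U ≤ normalizer (V i : Set G) := fun i => (hV i).2.2.2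
  rw [sSup_eq_iSup', ← e.symm.iSup_comp]
  refine ⟨iSup_le hVU, ?_, hP.prop_iSup (fun i => (hV i).2.2.1) hVU hUV,
    (le_iInf hUV).trans (iInf_normalizer_le_normalizer_iSup V)⟩
  rw [coe_iSup_eq_finProdSet V hVU hUV]
  exact (isCompact_finProdSet fun i => hU.of_isClosed_subset (hV i).2.1 (hV i).1).isClosed

theorem mem_sSup_aGenerators [T2Space G] (hP : IsAClassOn G P) {U : Subgroup G}
    (hU : IsCompact (U : Set G)) {x : G} :
    x ∈ sSup (aGenerators P U) ↔ ∃ A ∈ aGenerators P U, x ∈ A := by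
  refine mem_sSup_of_directedOn ⟨⊥, hP.bot_mem_aGenerators U⟩ fun A hA B hB => ?_
  refine ⟨sSup {A, B}, hP.sSup_mem_aGenerators hU (Set.toFinite _) ?_, le_sSup (by simp),
    le_sSup (by simp)⟩
  simp [Set.insert_subset_iff, hA, hB]

end IsAClassOn

variable [IsTopologicalGroup G]

theorem aClosure_eq (P : Subgroup G → Prop) (U : Subgroup G) :
    AClosure P U = (sSup (aGenerators P U)).topologicalClosure := by
  simp only [AClosure, aGenerators, le_normalizer_iff_forall_conj_mem]

theorem aClosure_le {U : Subgroup G} (hU : IsClosed (U : Set G)) : AClosure P U ≤ U := by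
  rw [aClosure_eq]
  exact topologicalClosure_minimal _ (sSup_le fun _ hA => hA.1) hU

end AClosure

section Commensurable
variable {G : Type*} [Group G] [TopologicalSpace G] [IsTopologicalGroup G] [T2Space G]
  {P : Subgroup G → Prop}

theorem aClosure_le_aClosure_of_le_normalizer (hP : IsAClassOn G P) {U N : Subgroup G}
    (hU : IsCompact (U : Set G)) (hN : IsOpen (N : Set G)) (hNU : N ≤ U)
    (hUN : U ≤ normalizer (N : Set G)) : AClosure P N ≤ AClosure P U := by
  have hNc : IsCompact (N : Set G) := hU.of_isClosed_subset (N.isClosed_of_isOpen hN) hNU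
  rw [aClosure_eq P N, aClosure_eq P U]
  refine topologicalClosure_minimal _ (sSup_le fun B hB => ?_) (isClosed_topologicalClosure _)
  set C := ⨆ u : U, B.map (MulAut.conj (u : G)).toMonoidHom
  have hCN : C ∈ aGenerators P N :=
    hP.sSup_mem_aGenerators hNc (finite_range_map_conj hU hN hB.2.2.2)
      (Set.range_subset_iff.mpr fun u => hP.map_conj_mem_aGenerators hB (hUN u.2))
  have hCU : C ∈ aGenerators P U :=
    ⟨hCN.1.trans hNU, hCN.2.1, hCN.2.2.1, le_normalizer_iSup_map_conj U B⟩
  calc B ≤ C := le_iSup_of_le 1 (map_conj_of_mem_normalizer (B.le_normalizer B.one_mem)).ge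
    _ ≤ sSup (aGenerators P U) := le_sSup hCU
    _ ≤ _ := le_topologicalClosure _

theorem aClosure_inf_le (hP : IsAClassOn G P) {U N : Subgroup G} (hU : IsCompact (U : Set G))
    (hN : IsOpen (N : Set G)) (hNU : N ≤ U) (hUN : U ≤ normalizer (N : Set G)) :
    AClosure P U ⊓ N ≤ AClosure P N := by
  rw [aClosure_eq P N, aClosure_eq P U]
  have hgen : sSup (aGenerators P U) ⊓ N ≤ (sSup (aGenerators P N)).topologicalClosure := by
    rintro x ⟨hx, hxN⟩
    obtain ⟨A, hA, hxA⟩ := (hP.mem_sSup_aGenerators hU).mp hx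
    exact le_topologicalClosure _
      (le_sSup (hP.inf_mem_aGenerators hA (N.isClosed_of_isOpen hN) hNU hUN) ⟨hxA, hxN⟩)
  rintro x ⟨hx, hxN⟩
  exact closure_minimal (fun y (hy : y ∈ (N : Set G) ∩ _) => hgen ⟨hy.2, hy.1⟩)
    (isClosed_topologicalClosure _)
    (hN.inter_closure ⟨hxN, hx⟩)

theorem commensurable_aClosure_of_le_normalizer (hP : IsAClassOn G P) {U N : Subgroup G}
    (hU : IsCompact (U : Set G)) (hN : IsOpen (N : Set G)) (hNU : N ≤ U)
    (hUN : U ≤ normalizer (N : Set G)) : (AClosure P U).Commensurable (AClosure P N) := by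
  have hle := aClosure_le_aClosure_of_le_normalizer hP hU hN hNU hUN
  refine ⟨by simp [relIndex_eq_one.mpr hle], ?_⟩
  refine mt (relIndex_eq_zero_of_le_left (aClosure_inf_le hP hU hN hNU hUN)) ?_
  rw [inf_relIndex_left]
  exact mt (relIndex_eq_zero_of_le_right (aClosure_le hU.isClosed))
    (relIndex_ne_zero_of_isOpen hU hN)

theorem commensurable_aClosure_of_le (hP : IsAClassOn G P) {U N : Subgroup G}
    (hU : IsCompact (U : Set G)) (hN : IsOpen (N : Set G)) (hNU : N ≤ U) :
    (AClosure P U).Commensurable (AClosure P N) := by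
  obtain ⟨M, hMN, hM, hUM⟩ := exists_isOpen_le_normalizer hU hN
  have hNc : IsCompact (N : Set G) := hU.of_isClosed_subset (N.isClosed_of_isOpen hN) hNU
  exact (commensurable_aClosure_of_le_normalizer hP hU hM (hMN.trans hNU) hUM).trans
    (commensurable_aClosure_of_le_normalizer hP hNc hM hMN (hNU.trans hUM)).symm

end Commensurable

theorem aClosure_commensurable_general (G : Type*) [Group G] [TopologicalSpace G]
    [IsTopologicalGroup G] [TotallyDisconnectedSpace G]
    (P : Subgroup G → Prop) (hP : IsAClassOn G P)
    (U V : Subgroup G) (hUc : IsCompact (U : Set G)) (hUo : IsOpen (U : Set G))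
    (hVc : IsCompact (V : Set G)) (hVo : IsOpen (V : Set G)) :
    Subgroup.Commensurable (AClosure P U) (AClosure P V) := by
  have hW : IsOpen ((U ⊓ V : Subgroup G) : Set G) := hUo.inter hVo
  exact (commensurable_aClosure_of_le hP hUc hW inf_le_left).trans
    (commensurable_aClosure_of_le hP hVc hW inf_le_right).symm

/-- For any two compact open subgroups `U, V` of a t.d.l.c. group `G`, the subgroups
`[A](U)` and `[A](V)` are commensurate. -/
theorem aClosure_commensurable (G : Type*) [Group G] [TopologicalSpace G]
    [IsTopologicalGroup G] [LocallyCompactSpace G] [TotallyDisconnectedSpace G]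
    (P : Subgroup G → Prop) (hP : IsAClassOn G P)
    (U V : Subgroup G) (hUc : IsCompact (U : Set G)) (hUo : IsOpen (U : Set G))
    (hVc : IsCompact (V : Set G)) (hVo : IsOpen (V : Set G)) :
    Subgroup.Commensurable (AClosure P U) (AClosure P V) :=
  aClosure_commensurable_general G P hP U V hUc hUo hVc hVo
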